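/- Let ψ : 𝔻 → Ω be a conformal homeomorphism from the unit disc onto a planar domain Ω, let α > 2, and suppose ∬_𝔻 |ψ'(u,v)|^α du dv < ∞. Let r ≥ α/(α−2) and set s = ((α−2)/α)·r. Then for every measurable f : Ω → ℝ with ∬_Ω |f|^r J_φ dxdy < ∞ (where φ = ψ^{-1} and J_φ = |φ'|² is its Jacobian), one has ‖f‖_{L^s(Ω)} ≤ (∬_𝔻 |ψ'|^α dudv)^{(2/α)(1/s)} · (∬_Ω |f|^r J_φ dxdy)^{1/r}. -/

import Mathlib

/-!
Pull everything back to the disc along `ψ`. The real Jacobian of `ψ` is `‖ψ'‖²`, and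
`(φ ∘ ψ)' = 1` gives `J_φ ∘ ψ = ‖ψ'‖⁻²`, so the weighted norm of `f` on `Ω` is the plain
`L^r` norm of `f ∘ ψ` on the disc, while `∫_Ω |f|^s = ∫_𝔻 ‖ψ'‖² |f ∘ ψ|^s`. Hölder's inequality
with the conjugate exponents `r / s = α / (α - 2)` and `α / 2` bounds the latter by
`(∫_𝔻 ‖ψ'‖^α)^(2/α) (∫_𝔻 |f ∘ ψ|^r)^(s/r)`.
-/

open MeasureTheory Metric Set

theorem abs_det_restrictScalars_toSpanSingleton (z : ℂ) :
    |((ContinuousLinearMap.toSpanSingleton ℂ z).restrictScalars ℝ).det| = ‖z‖ ^ 2 := by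
  simp [ContinuousLinearMap.det, LinearMap.det_restrictScalars, Algebra.norm_complex_eq,
    Complex.normSq_eq_norm_sq]

theorem DifferentiableOn.isOpen_image_of_injOn {U : Set ℂ} {f : ℂ → ℂ}
    (hf : DifferentiableOn ℂ f U) (hU : IsOpen U) (hUc : IsPreconnected U) (hinj : InjOn f U) :
    IsOpen (f '' U) := by
  rcases (hf.analyticOnNhd hU).is_constant_or_isOpen hUc with ⟨c, hc⟩ | hopen
  · have hsub : U.Subsingleton := fun x hx y hy => hinj hx hy ((hc x hx).trans (hc y hy).symm)
    rcases hsub.eq_empty_or_singleton with rfl | ⟨x, rfl⟩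
    · simp
    · exact absurd hU (not_isOpen_singleton x)
  · exact hopen U subset_rfl hU

theorem deriv_comp_mul_deriv_eq_one {φ ψ : ℂ → ℂ} {w : ℂ} (hψ : DifferentiableAt ℂ ψ w)
    (hφ : DifferentiableAt ℂ φ (ψ w)) (hinv : ∀ᶠ z in nhds w, φ (ψ z) = z) :
    deriv φ (ψ w) * deriv ψ w = 1 :=
  (hφ.hasDerivAt.comp w hψ.hasDerivAt).unique ((hasDerivAt_id w).congr_of_eventuallyEq hinv)

section ChangeOfVariables

variable {E : Type*} [NormedAddCommGroup E] [NormedSpace ℝ E]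
  {s : Set ℂ} {ψ ψ' : ℂ → ℂ}

theorem integral_image_eq_integral_norm_sq_smul (hs : MeasurableSet s)
    (hψ : ∀ w ∈ s, HasDerivAt ψ (ψ' w) w) (hinj : InjOn ψ s) (g : ℂ → E) :
    ∫ x in ψ '' s, g x = ∫ w in s, ‖ψ' w‖ ^ 2 • g (ψ w) := by
  rw [integral_image_eq_integral_abs_det_fderiv_smul volume hs
    (fun w hw => ((hψ w hw).hasFDerivAt.restrictScalars ℝ).hasFDerivWithinAt) hinj g]
  simp only [abs_det_restrictScalars_toSpanSingleton]

theorem integrableOn_image_iff_integrableOn_norm_sq_smul (hs : MeasurableSet s)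
    (hψ : ∀ w ∈ s, HasDerivAt ψ (ψ' w) w) (hinj : InjOn ψ s) (g : ℂ → E) :
    IntegrableOn g (ψ '' s) ↔ IntegrableOn (fun w => ‖ψ' w‖ ^ 2 • g (ψ w)) s := by
  rw [integrableOn_image_iff_integrableOn_abs_det_fderiv_smul volume hs
    (fun w hw => ((hψ w hw).hasFDerivAt.restrictScalars ℝ).hasFDerivWithinAt) hinj g]
  simp only [abs_det_restrictScalars_toSpanSingleton]

end ChangeOfVariables

theorem integral_mul_abs_rpow_rpow_one_div_le {X : Type*} [MeasurableSpace X] {μ : Measure X}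
    {g J : X → ℝ} {q r s : ℝ} (hs : 0 < s) (hrsq : (r / s).HolderConjugate q)
    (hg : AEStronglyMeasurable g μ) (hJ : AEStronglyMeasurable J μ) (hJ0 : 0 ≤ᵐ[μ] J)
    (hgr : Integrable (fun x => |g x| ^ r) μ) (hJq : Integrable (fun x => J x ^ q) μ) :
    (∫ x, J x * |g x| ^ s ∂μ) ^ (1 / s) ≤
      (∫ x, J x ^ q ∂μ) ^ (1 / q * (1 / s)) * (∫ x, |g x| ^ r ∂μ) ^ (1 / r) := by
  set p := r / s with hp_def
  have hp : 0 < p := hrsq.pos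
  have hr : r = s * p := by rw [hp_def]; field_simp
  have hgs_pow : ∀ x, (|g x| ^ s) ^ p = |g x| ^ r := fun x => by
    rw [← Real.rpow_mul (abs_nonneg _), ← hr]
  have hgs : MemLp (fun x => |g x| ^ s) (ENNReal.ofReal p) μ := by
    refine (integrable_norm_rpow_iff (hg.aemeasurable.abs.pow_const s).aestronglyMeasurable
      (by simpa using hp) ENNReal.ofReal_ne_top).1 ?_
    simpa only [ENNReal.toReal_ofReal hp.le, Real.norm_eq_abs,
      abs_of_nonneg (Real.rpow_nonneg (abs_nonneg _) _), hgs_pow] using hgr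
  have hJ' : MemLp J (ENNReal.ofReal q) μ := by
    refine (integrable_norm_rpow_iff hJ (by simpa using hrsq.symm.pos) ENNReal.ofReal_ne_top).1 ?_
    refine hJq.congr ?_
    filter_upwards [hJ0] with x hx
    rw [ENNReal.toReal_ofReal hrsq.symm.nonneg, Real.norm_of_nonneg hx]
  have holder := integral_mul_le_Lp_mul_Lq_of_nonneg hrsq
    (.of_forall fun x => Real.rpow_nonneg (abs_nonneg (g x)) s) hJ0 hgs hJ'
  simp only [hgs_pow] at holder
  have hA : 0 ≤ ∫ x, J x ^ q ∂μ := integral_nonneg_of_ae <| by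
    filter_upwards [hJ0] with x hx using Real.rpow_nonneg hx q
  have hB : 0 ≤ ∫ x, |g x| ^ r ∂μ := integral_nonneg fun x => Real.rpow_nonneg (abs_nonneg _) r
  calc (∫ x, J x * |g x| ^ s ∂μ) ^ (1 / s)
      ≤ ((∫ x, |g x| ^ r ∂μ) ^ (1 / p) * (∫ x, J x ^ q ∂μ) ^ (1 / q)) ^ (1 / s) := by
        gcongr
        · exact integral_nonneg_of_ae <| by
            filter_upwards [hJ0] with x hx using mul_nonneg hx (Real.rpow_nonneg (abs_nonneg _) s)
        · simpa only [mul_comm] using holder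
    _ = (∫ x, J x ^ q ∂μ) ^ (1 / q * (1 / s)) * (∫ x, |g x| ^ r ∂μ) ^ (1 / r) := by
        rw [Real.mul_rpow (by positivity) (by positivity), ← Real.rpow_mul hA,
          ← Real.rpow_mul hB, mul_comm, hr]
        field_simp

theorem holderConjugate_div_half_of_eq_mul {α r s : ℝ} (hα : 2 < α) (hr : r ≠ 0)
    (hs : s = (α - 2) / α * r) : (r / s).HolderConjugate (α / 2) := by
  have hrs : r / s = (α / 2).conjExponent := by
    rw [hs, Real.conjExponent]
    field_simp
  exact hrs ▸ (Real.HolderConjugate.conjExponent (by linarith)).symm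

section InverseJacobian

variable {U : Set ℂ} {φ ψ : ℂ → ℂ}

theorem eqOn_norm_deriv_sq_smul_mul_norm_deriv_sq
    (hφψ : ∀ w ∈ U, deriv φ (ψ w) * deriv ψ w = 1) (g : ℂ → ℝ) :
    EqOn (fun w => ‖deriv ψ w‖ ^ 2 • (g (ψ w) * ‖deriv φ (ψ w)‖ ^ 2)) (g ∘ ψ) U := fun w hw => by
  dsimp only
  rw [smul_eq_mul, mul_left_comm, ← mul_pow, ← norm_mul, mul_comm (deriv ψ w), hφψ w hw,
    norm_one, one_pow, mul_one, Function.comp_apply]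

theorem integral_image_mul_norm_deriv_sq (hU : MeasurableSet U)
    (hψ : ∀ w ∈ U, HasDerivAt ψ (deriv ψ w) w) (hinj : InjOn ψ U)
    (hφψ : ∀ w ∈ U, deriv φ (ψ w) * deriv ψ w = 1) (g : ℂ → ℝ) :
    ∫ x in ψ '' U, g x * ‖deriv φ x‖ ^ 2 = ∫ w in U, g (ψ w) := by
  rw [integral_image_eq_integral_norm_sq_smul hU hψ hinj]
  exact setIntegral_congr_fun hU (eqOn_norm_deriv_sq_smul_mul_norm_deriv_sq hφψ g)

theorem integrableOn_image_mul_norm_deriv_sq_iff (hU : MeasurableSet U)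
    (hψ : ∀ w ∈ U, HasDerivAt ψ (deriv ψ w) w) (hinj : InjOn ψ U)
    (hφψ : ∀ w ∈ U, deriv φ (ψ w) * deriv ψ w = 1) (g : ℂ → ℝ) :
    IntegrableOn (fun x => g x * ‖deriv φ x‖ ^ 2) (ψ '' U) ↔ IntegrableOn (g ∘ ψ) U := by
  rw [integrableOn_image_iff_integrableOn_norm_sq_smul hU hψ hinj]
  exact integrableOn_congr_fun (eqOn_norm_deriv_sq_smul_mul_norm_deriv_sq hφψ g) hU

end InverseJacobian

/-- Weighted–to–unweighted embedding in a conformal α-regular domain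
(Lemma 3.3): with s = ((α−2)/α)·r,
‖f‖_{L^s(Ω)} ≤ (∬_𝔻 |ψ'|^α)^{(2/α)(1/s)} · ‖f‖_{L^r(Ω,h)} where h = J_φ = |φ'|²
and φ = ψ⁻¹ : Ω → 𝔻 is conformal. -/
theorem stmt3 (Ω : Set ℂ) (ψ φ : ℂ → ℂ)
    (hψd : DifferentiableOn ℂ ψ (ball (0:ℂ) 1))
    (hψbij : Set.BijOn ψ (ball (0:ℂ) 1) Ω)
    (hφd : DifferentiableOn ℂ φ Ω)
    (hinv : Set.InvOn φ ψ (ball (0:ℂ) 1) Ω)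
    (α : ℝ) (hα : 2 < α)
    (hψα : IntegrableOn (fun w => ‖deriv ψ w‖ ^ α) (ball (0:ℂ) 1))
    (r s : ℝ) (hr : α / (α - 2) ≤ r) (hs : s = (α - 2) / α * r)
    (f : ℂ → ℝ) (hfm : Measurable f)
    (hfw : IntegrableOn (fun x => |f x| ^ r * ‖deriv φ x‖ ^ 2) Ω) :
    (∫ x in Ω, |f x| ^ s) ^ (1 / s) ≤
      (∫ w in ball (0:ℂ) 1, ‖deriv ψ w‖ ^ α) ^ (2 / α * (1 / s)) *
        (∫ x in Ω, |f x| ^ r * ‖deriv φ x‖ ^ 2) ^ (1 / r) := by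
  have hα2 : 0 < α - 2 := by linarith
  have hr0 : 0 < r := (div_pos (by linarith) hα2).trans_le hr
  have hs0 : 0 < s := by rw [hs]; exact mul_pos (div_pos hα2 (by linarith)) hr0
  have hexp := holderConjugate_div_half_of_eq_mul hα hr0.ne' hs
  have hψ' : ∀ w ∈ ball (0:ℂ) 1, HasDerivAt ψ (deriv ψ w) w := fun w hw =>
    (hψd.differentiableAt (isOpen_ball.mem_nhds hw)).hasDerivAt
  have hΩ : IsOpen Ω := hψbij.image_eq ▸
    hψd.isOpen_image_of_injOn isOpen_ball (convex_ball 0 1).isPreconnected hψbij.injOn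
  have hφψ : ∀ w ∈ ball (0:ℂ) 1, deriv φ (ψ w) * deriv ψ w = 1 := fun w hw =>
    deriv_comp_mul_deriv_eq_one (hψ' w hw).differentiableAt
      (hφd.differentiableAt (hΩ.mem_nhds (hψbij.mapsTo hw)))
      (Filter.eventually_of_mem (isOpen_ball.mem_nhds hw) fun z hz => hinv.1 hz)
  rw [← hψbij.image_eq] at hfw ⊢
  rw [integral_image_eq_integral_norm_sq_smul measurableSet_ball hψ' hψbij.injOn,
    integral_image_mul_norm_deriv_sq measurableSet_ball hψ' hψbij.injOn hφψ]
  rw [integrableOn_image_mul_norm_deriv_sq_iff measurableSet_ball hψ' hψbij.injOn hφψ] at hfw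
  have hJα : ∀ w, (‖deriv ψ w‖ ^ 2) ^ (α / 2) = ‖deriv ψ w‖ ^ α := fun w => by
    rw [← Real.rpow_natCast, ← Real.rpow_mul (norm_nonneg _), Nat.cast_ofNat,
      mul_div_cancel₀ α two_ne_zero]
  have key := integral_mul_abs_rpow_rpow_one_div_le hs0 hexp
    (hfm.comp_aemeasurable (hψd.continuousOn.aemeasurable measurableSet_ball)).aestronglyMeasurable
    ((measurable_deriv ψ).norm.pow_const 2).aestronglyMeasurable
    (.of_forall fun w => by positivity) hfw (by simpa only [hJα] using hψα.integrable)
  simpa only [hJα, one_div_div, smul_eq_mul, Function.comp_apply] using key
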